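/- Define f_1(n) = ((n+144)/30)·6^{(n-6)/5} for 14 ≤ n ≤ 30 and f_1(n) = ((n-1)/5)·6^{(n-6)/5} for n ≥ 31. Then f_1 is monotonically increasing on integers n ≥ 14, and moreover f_1(n-1) + f_1(n-t) < f_1(n) whenever n-1 ≥ 14, n-t ≥ 14 and t ≥ 4. -/

import Mathlib

/-- The auxiliary function `f₁` defined for `n ≥ 14`. -/
noncomputable def f1 (n : ℕ) : ℝ :=
  if n ≤ 30 then (((n : ℝ) + 144) / 30) * (6 : ℝ) ^ (((n : ℝ) - 6) / 5)
  else (((n : ℝ) - 1) / 5) * (6 : ℝ) ^ (((n : ℝ) - 6) / 5)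

/-!
Write `f₁(n) = c(n) · 6^((n-6)/5)`. The coefficient `c` is positive and nondecreasing: it
jumps from `174/30` to `6` between `n = 30` and `n = 31`. Hence `f₁` is a product of positive
nondecreasing functions. For superadditivity it suffices, by monotonicity, to treat `t = 4`;
with `ρ = 6^(1/5)` and `X = 6^((m-6)/5)`,
`f₁(m+3) + f₁(m) ≤ c(m+4) X (ρ³ + 1) < c(m+4) X ρ⁴ = f₁(m+4)`,
because `ρ > 7/5` and `x³ + 1 < x⁴` for `x ≥ 7/5`.
-/

lemma Real.rpow_add_natCast_div {b : ℝ} (hb : 0 < b) (x d : ℝ) (k : ℕ) :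
    b ^ ((x + k) / d) = b ^ (x / d) * (b ^ d⁻¹) ^ k := by
  rw [← Real.rpow_natCast, ← Real.rpow_mul hb.le, ← Real.rpow_add hb]
  congr 1
  ring

lemma seven_fifths_lt_rpow_inv_five : (7 / 5 : ℝ) < 6 ^ (5⁻¹ : ℝ) := by
  rw [Real.lt_rpow_inv_iff_of_pos (by norm_num) (by norm_num) (by norm_num)]
  norm_num

lemma pow_three_add_one_lt_pow_four {x : ℝ} (hx : 7 / 5 ≤ x) : x ^ 3 + 1 < x ^ 4 := by
  nlinarith [pow_le_pow_left₀ (by norm_num) hx 3]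

noncomputable def f1Coeff (n : ℕ) : ℝ :=
  if n ≤ 30 then ((n : ℝ) + 144) / 30 else ((n : ℝ) - 1) / 5

lemma f1_eq_f1Coeff_mul (n : ℕ) : f1 n = f1Coeff n * 6 ^ (((n : ℝ) - 6) / 5) :=
  (ite_mul _ _ _ _).symm

lemma f1Coeff_pos (n : ℕ) : 0 < f1Coeff n := by
  unfold f1Coeff
  split_ifs with hn
  · positivity
  · have : (31 : ℝ) ≤ n := by exact_mod_cast Nat.lt_of_not_le hn
    linarith

lemma f1Coeff_monotone : Monotone f1Coeff := by
  intro m n hmn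
  have hmn' : (m : ℝ) ≤ n := by exact_mod_cast hmn
  unfold f1Coeff
  split_ifs with hm hn hn
  · linarith
  · have hm' : (m : ℝ) ≤ 30 := by exact_mod_cast hm
    have hn' : (31 : ℝ) ≤ n := by exact_mod_cast Nat.lt_of_not_le hn
    linarith
  · omega
  · linarith

lemma f1_monotone : Monotone f1 := by
  have hpow : Monotone fun n : ℕ ↦ (6 : ℝ) ^ (((n : ℝ) - 6) / 5) := by
    intro m n hmn
    dsimp only
    gcongr
    norm_num
  rw [show f1 = fun n ↦ f1Coeff n * 6 ^ (((n : ℝ) - 6) / 5) from funext f1_eq_f1Coeff_mul]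
  exact f1Coeff_monotone.mul hpow (fun n ↦ (f1Coeff_pos n).le) (fun n ↦ by positivity)

lemma f1_add (m k : ℕ) :
    f1 (m + k) = f1Coeff (m + k) * 6 ^ (((m : ℝ) - 6) / 5) * (6 ^ (5⁻¹ : ℝ)) ^ k := by
  rw [f1_eq_f1Coeff_mul, mul_assoc, ← Real.rpow_add_natCast_div (by norm_num)]
  push_cast
  congr 3
  ring

lemma f1_add_three_add_f1_lt (m : ℕ) : f1 (m + 3) + f1 m < f1 (m + 4) := by
  set ρ : ℝ := 6 ^ (5⁻¹ : ℝ)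
  set X : ℝ := 6 ^ (((m : ℝ) - 6) / 5)
  have hX : 0 < X := by positivity
  have hc₄ : 0 < f1Coeff (m + 4) := f1Coeff_pos _
  have h₀ : f1 m = f1Coeff m * X * ρ ^ 0 := f1_add m 0
  calc f1 (m + 3) + f1 m = f1Coeff (m + 3) * X * ρ ^ 3 + f1Coeff m * X := by
        rw [f1_add, h₀, pow_zero, mul_one]
    _ ≤ f1Coeff (m + 4) * X * ρ ^ 3 + f1Coeff (m + 4) * X := by
        gcongr <;> exact f1Coeff_monotone (by omega)
    _ = f1Coeff (m + 4) * X * (ρ ^ 3 + 1) := by ring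
    _ < f1Coeff (m + 4) * X * ρ ^ 4 := by
        gcongr
        exact pow_three_add_one_lt_pow_four seven_fifths_lt_rpow_inv_five.le
    _ = f1 (m + 4) := (f1_add m 4).symm

theorem f1_monotone_and_superadditive :
    (∀ m n : ℕ, 14 ≤ m → m ≤ n → f1 m ≤ f1 n) ∧
    (∀ n t : ℕ, 4 ≤ t → 14 ≤ n - 1 → 14 ≤ n - t → f1 (n - 1) + f1 (n - t) < f1 n) := by
  refine ⟨fun m n _ hmn ↦ f1_monotone hmn, fun n t ht _ hnt ↦ ?_⟩
  obtain ⟨m, rfl⟩ : ∃ m, n = m + 4 := ⟨n - 4, by omega⟩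
  calc f1 (m + 4 - 1) + f1 (m + 4 - t) ≤ f1 (m + 3) + f1 m := by
        rw [show m + 4 - 1 = m + 3 by omega]
        gcongr
        exact f1_monotone (by omega)
    _ < f1 (m + 4) := f1_add_three_add_f1_lt m
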